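/- Let λ > 2 and s ∈ ℂ. Define the operators L and K on pairs (f₁, f₂) of functions ℝ → ℂ by L(f₁, f₂) = (τ_s(g₂)f₁ + τ_s(g₁⁻¹)f₁ + τ_s(g₂)f₂, τ_s(g₃)f₁ + τ_s(g₁)f₂ + τ_s(g₃)f₂) and K(f₁, f₂) = (τ_s(J)f₂, τ_s(J)f₁), where (τ_s(J)f)(x) = f(−x). Then K ∘ L = L ∘ K: for each of the two components, the resulting functions agree at every real x at which all the occurring Möbius denominators are nonzero. (This is the J-symmetry of the transfer operator which leads to the factorization of the Selberg zeta function.) -/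

import Mathlib

open Matrix

/-- The weighted composition operator `τ_s(g)` attached to a real 2×2 matrix `g` of
determinant `±1`: `(τ_s(g)f)(x) = ((c'x+d')⁻²)^s · f((a'x+b')/(c'x+d'))`, where
`!![a',b';c',d'] = g⁻¹` and the power is the principal complex power. -/
noncomputable def tauOp (s : ℂ) (g : Matrix (Fin 2) (Fin 2) ℝ) (f : ℝ → ℂ) (x : ℝ) : ℂ :=
  ((((g⁻¹ 1 0 * x + g⁻¹ 1 1) ^ (-2 : ℤ) : ℝ) : ℂ) ^ s) *
    f ((g⁻¹ 0 0 * x + g⁻¹ 0 1) / (g⁻¹ 1 0 * x + g⁻¹ 1 1))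

/-- The finite-term transfer operator `𝓛_{R,s}` of the reduced discretization:
`L(f₁,f₂) = (τ_s(g₂)f₁ + τ_s(g₁⁻¹)f₁ + τ_s(g₂)f₂, τ_s(g₃)f₁ + τ_s(g₁)f₂ + τ_s(g₃)f₂)`,
where `g₁ = !![1,λ;0,1]`, `g₂ = !![λ,1;-1,0]`, `g₃ = !![λ,-1;1,0]`. -/
noncomputable def Lop (lam : ℝ) (s : ℂ) (f : (ℝ → ℂ) × (ℝ → ℂ)) : (ℝ → ℂ) × (ℝ → ℂ) :=
  (fun x => tauOp s !![lam, 1; -1, 0] f.1 x + tauOp s (!![1, lam; 0, 1])⁻¹ f.1 x +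
      tauOp s !![lam, 1; -1, 0] f.2 x,
   fun x => tauOp s !![lam, -1; 1, 0] f.1 x + tauOp s !![1, lam; 0, 1] f.2 x +
      tauOp s !![lam, -1; 1, 0] f.2 x)

/-- The symmetry operator `K(f₁,f₂) = (τ_s(J)f₂, τ_s(J)f₁)`, where
`(τ_s(J)f)(x) = f(−x)`. -/
def Kop (f : (ℝ → ℂ) × (ℝ → ℂ)) : (ℝ → ℂ) × (ℝ → ℂ) :=
  (fun x => f.2 (-x), fun x => f.1 (-x))

/-!
Conjugation by `J = diag(-1, 1)` swaps `g₂` and `g₃` and inverts `g₁`, and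
`τ_s(J) τ_s(g) = τ_s(JgJ) τ_s(J)` for every `g`: reflecting `x ↦ -x` conjugates the Möbius
action of `g⁻¹` into that of `J g⁻¹ J` and leaves the weight `(c'x + d')⁻²` unchanged.
Hence `K` merely permutes the six terms of `L`.
-/

def reflectionMatrix : Matrix (Fin 2) (Fin 2) ℝ := !![-1, 0; 0, 1]

lemma reflectionMatrix_mul_self : reflectionMatrix * reflectionMatrix = 1 := by
  simp [reflectionMatrix, Matrix.one_fin_two]

lemma inv_reflectionMatrix : reflectionMatrix⁻¹ = reflectionMatrix :=
  Matrix.inv_eq_right_inv reflectionMatrix_mul_self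

lemma reflectionMatrix_conj_apply (A : Matrix (Fin 2) (Fin 2) ℝ) :
    reflectionMatrix * A * reflectionMatrix = !![A 0 0, -A 0 1; -A 1 0, A 1 1] := by
  rw [Matrix.eta_fin_two A]
  simp [reflectionMatrix]

lemma tauOp_neg (s : ℂ) (g : Matrix (Fin 2) (Fin 2) ℝ) (f : ℝ → ℂ) (x : ℝ) :
    tauOp s g f (-x) = tauOp s (reflectionMatrix * g * reflectionMatrix) (fun y => f (-y)) x := by
  have hinv : (reflectionMatrix * g * reflectionMatrix)⁻¹ =
      reflectionMatrix * g⁻¹ * reflectionMatrix := by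
    rw [Matrix.mul_inv_rev, Matrix.mul_inv_rev, inv_reflectionMatrix, Matrix.mul_assoc]
  rw [tauOp, tauOp, hinv, reflectionMatrix_conj_apply]
  simp only [of_apply, cons_val', cons_val_zero, cons_val_one, empty_val', cons_val_fin_one]
  have hden : g⁻¹ 1 0 * -x + g⁻¹ 1 1 = -g⁻¹ 1 0 * x + g⁻¹ 1 1 := by ring
  have hnum : g⁻¹ 0 0 * -x + g⁻¹ 0 1 = -(g⁻¹ 0 0 * x + -g⁻¹ 0 1) := by ring
  rw [hden, hnum, neg_div]

lemma inv_unitriangular (t : ℝ) :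
    (!![1, t; 0, 1] : Matrix (Fin 2) (Fin 2) ℝ)⁻¹ = !![1, -t; 0, 1] :=
  Matrix.inv_eq_right_inv (by simp [Matrix.one_fin_two])

lemma reflectionMatrix_conj_unitriangular (t : ℝ) :
    reflectionMatrix * !![1, t; 0, 1] * reflectionMatrix = !![1, -t; 0, 1] := by
  simp [reflectionMatrix_conj_apply]

lemma reflectionMatrix_conj_g₂ (lam : ℝ) :
    reflectionMatrix * !![lam, 1; -1, 0] * reflectionMatrix = !![lam, -1; 1, 0] := by
  simp [reflectionMatrix_conj_apply]

lemma reflectionMatrix_conj_g₃ (lam : ℝ) :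
    reflectionMatrix * !![lam, -1; 1, 0] * reflectionMatrix = !![lam, 1; -1, 0] := by
  simp [reflectionMatrix_conj_apply]

theorem transfer_operator_J_symmetry_general
    (lam : ℝ) (s : ℂ) (f₁ f₂ : ℝ → ℂ) (x : ℝ) :
    (Kop (Lop lam s (f₁, f₂))).1 x = (Lop lam s (Kop (f₁, f₂))).1 x ∧
    (Kop (Lop lam s (f₁, f₂))).2 x = (Lop lam s (Kop (f₁, f₂))).2 x := by
  simp only [Kop, Lop, tauOp_neg, inv_unitriangular, reflectionMatrix_conj_unitriangular,
    reflectionMatrix_conj_g₂, reflectionMatrix_conj_g₃, neg_neg]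
  constructor <;> ring

/-- The `J`-symmetry of the transfer operator: `K ∘ L = L ∘ K`, both
components agreeing at every real `x` at which all the occurring Möbius denominators are
nonzero. -/
theorem transfer_operator_J_symmetry
    (lam : ℝ) (hlam : 2 < lam) (s : ℂ) (f₁ f₂ : ℝ → ℂ) (x : ℝ)
    (hden : ∀ M ∈ ({!![1, lam; 0, 1], (!![1, lam; 0, 1])⁻¹, !![lam, 1; -1, 0],
        !![lam, -1; 1, 0]} : Set (Matrix (Fin 2) (Fin 2) ℝ)),
      ∀ y : ℝ, (y = x ∨ y = -x) → M⁻¹ 1 0 * y + M⁻¹ 1 1 ≠ 0) :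
    (Kop (Lop lam s (f₁, f₂))).1 x = (Lop lam s (Kop (f₁, f₂))).1 x ∧
    (Kop (Lop lam s (f₁, f₂))).2 x = (Lop lam s (Kop (f₁, f₂))).2 x :=
  transfer_operator_J_symmetry_general lam s f₁ f₂ x
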